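/- arXiv:1612.06655 — 3 statements merged into one kernel-verified Lean document; each statement's English description precedes it below -/
import Mathlib

section
/- For perturbations ΔA ∈ ℝ^{m×n}, Δb ∈ ℝ^m, an approximate solution y ∈ ℝⁿ, residual r_y = b - Ay, and θ > 0, the perturbed normal equation (A+ΔA)ᵀΣ_{pq}(b+Δb-(A+ΔA)y) = 0 holds if and only if J_ILS·[vec(ΔA); θΔb] = -AᵀΣ_{pq}r_y + ΔAᵀΣ_{pq}(ΔAy - Δb), where J_ILS = [ I_n ⊗ r_yᵀΣ_{pq} - AᵀΣ_{pq}(yᵀ ⊗ I_m), θ^{-1}AᵀΣ_{pq} ]. -/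
/-!
Under `vec(BXC) = (Cᵀ ⊗ B) vec X` the two Kronecker blocks of `J_ILS` act on `vec ΔA` as
`ΔA ↦ ΔAᵀ Σ r_y` and `ΔA ↦ AᵀΣ ΔA y`, and the factor `θ⁻¹` cancels the `θ` in front of `Δb`,
so `J_ILS [vec ΔA; θΔb] = ΔAᵀΣ r_y − AᵀΣ ΔA y + AᵀΣ Δb`. Expanding the perturbed normal
equation, its left-hand side is exactly this vector minus `−AᵀΣ r_y + ΔAᵀΣ(ΔA y − Δb)`.
-/

open Matrix Kronecker

noncomputable section

/-- The signature matrix `Σ_{pq} = diag(I_p, -I_q)`. -/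
def Sig (p q : ℕ) : Matrix (Fin p ⊕ Fin q) (Fin p ⊕ Fin q) ℝ :=
  Matrix.fromBlocks 1 0 0 (-1)

/-- Column-stacking vectorization of a matrix (indexed by (column, row)). -/
def vec {m n : Type*} (A : Matrix m n ℝ) : n × m → ℝ := fun ji => A ji.2 ji.1

/-- The matrix `J_ILS = [ I_n ⊗ r_yᵀΣ − AᵀΣ(yᵀ ⊗ I_m) , θ⁻¹ AᵀΣ ]`. -/
def JILS (p q n : ℕ) (A : Matrix (Fin p ⊕ Fin q) (Fin n) ℝ)
    (ry : Fin p ⊕ Fin q → ℝ) (y : Fin n → ℝ) (θ : ℝ) :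
    Matrix (Fin n) ((Fin n × (Fin p ⊕ Fin q)) ⊕ (Fin p ⊕ Fin q)) ℝ :=
  Matrix.fromCols
    ((Matrix.reindex (Equiv.prodPUnit (Fin n)) (Equiv.refl _)
        ((1 : Matrix (Fin n) (Fin n) ℝ) ⊗ₖ Matrix.replicateRow Unit ((Sig p q).vecMul ry))) -
      (Aᵀ * Sig p q) *
        (Matrix.reindex (Equiv.punitProd (Fin p ⊕ Fin q)) (Equiv.refl _)
          (Matrix.replicateRow Unit y ⊗ₖ (1 : Matrix (Fin p ⊕ Fin q) (Fin p ⊕ Fin q) ℝ))))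
    (θ⁻¹ • (Aᵀ * Sig p q))

section Kronecker

variable {R m n : Type*} [CommRing R] [Fintype m] [Fintype n]

theorem one_kronecker_replicateRow_mulVec_vec [DecidableEq n] (w : m → R) (X : Matrix m n R) :
    reindex (Equiv.prodPUnit n) (Equiv.refl _) (1 ⊗ₖ replicateRow Unit w) *ᵥ X.vec = Xᵀ *ᵥ w := by
  rw [reindex_apply, submatrix_mulVec_equiv, Equiv.symm_symm, Equiv.coe_refl, Function.comp_id,
    kronecker_mulVec_vec]
  ext j
  simp [mulVec, dotProduct, mul_apply, mul_comm]

theorem replicateRow_kronecker_one_mulVec_vec [DecidableEq m] (y : n → R) (X : Matrix m n R) :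
    reindex (Equiv.punitProd m) (Equiv.refl _) (replicateRow Unit y ⊗ₖ 1) *ᵥ X.vec = X *ᵥ y := by
  rw [reindex_apply, submatrix_mulVec_equiv, Equiv.symm_symm, Equiv.coe_refl, Function.comp_id,
    kronecker_mulVec_vec]
  ext i
  simp [mulVec, dotProduct, mul_apply]

end Kronecker

theorem Sig_transpose (p q : ℕ) : (Sig p q)ᵀ = Sig p q := by
  simp [Sig, fromBlocks_transpose]

theorem vecMul_Sig (p q : ℕ) (v : Fin p ⊕ Fin q → ℝ) : v ᵥ* Sig p q = Sig p q *ᵥ v := by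
  rw [← vecMul_transpose, Sig_transpose]

theorem JILS_mulVec (p q n : ℕ) (A ΔA : Matrix (Fin p ⊕ Fin q) (Fin n) ℝ)
    (ry Δb : Fin p ⊕ Fin q → ℝ) (y : Fin n → ℝ) {θ : ℝ} (hθ : θ ≠ 0) :
    JILS p q n A ry y θ *ᵥ Sum.elim (_root_.vec ΔA) (θ • Δb) =
      ΔAᵀ *ᵥ (Sig p q *ᵥ ry) - (Aᵀ * Sig p q) *ᵥ (ΔA *ᵥ y) + (Aᵀ * Sig p q) *ᵥ Δb := by
  rw [JILS, fromCols_mulVec_sumElim, sub_mulVec, ← mulVec_mulVec, smul_mulVec, mulVec_smul,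
    smul_smul, inv_mul_cancel₀ hθ, one_smul, vecMul_Sig, show _root_.vec ΔA = ΔA.vec from rfl,
    one_kronecker_replicateRow_mulVec_vec, replicateRow_kronecker_one_mulVec_vec]

theorem perturbed_normal_residual_eq {R m n : Type*} [CommRing R] [Fintype m]
    [Fintype n] (S : Matrix m m R) (A ΔA : Matrix m n R) (b Δb : m → R) (y : n → R) :
    (A + ΔA)ᵀ *ᵥ (S *ᵥ (b + Δb - (A + ΔA) *ᵥ y)) =
      (ΔAᵀ *ᵥ (S *ᵥ (b - A *ᵥ y)) - (Aᵀ * S) *ᵥ (ΔA *ᵥ y) + (Aᵀ * S) *ᵥ Δb) -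
        (-((Aᵀ * S) *ᵥ (b - A *ᵥ y)) + (ΔAᵀ * S) *ᵥ (ΔA *ᵥ y - Δb)) := by
  simp only [← mulVec_mulVec, transpose_add, add_mulVec, mulVec_add, mulVec_sub]
  abel

/-- The perturbed normal equation `(A+ΔA)ᵀΣ(b+Δb−(A+ΔA)y) = 0` holds iff
`J_ILS [vec ΔA; θΔb] = −AᵀΣ r_y + ΔAᵀΣ(ΔA y − Δb)`, where `r_y = b − Ay`. -/
theorem stmt4 (p q n : ℕ) (A ΔA : Matrix (Fin p ⊕ Fin q) (Fin n) ℝ)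
    (b Δb : Fin p ⊕ Fin q → ℝ) (y : Fin n → ℝ) (θ : ℝ) (hθ : 0 < θ) :
    (A + ΔA)ᵀ.mulVec ((Sig p q).mulVec (b + Δb - (A + ΔA).mulVec y)) = 0 ↔
      (JILS p q n A (b - A.mulVec y) y θ).mulVec (Sum.elim (_root_.vec ΔA) (θ • Δb)) =
        -(Aᵀ * Sig p q).mulVec (b - A.mulVec y) +
          (ΔAᵀ * Sig p q).mulVec (ΔA.mulVec y - Δb) := by
  rw [JILS_mulVec p q n A ΔA _ Δb y hθ.ne', perturbed_normal_residual_eq, sub_eq_zero]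

end
end

section
/- Under the hypotheses of the linearization estimate theorem, the nonlinear system [vec(ΔA); θΔb] = -J_ILS†AᵀΣ_{pq}r_y + J_ILS†ΔAᵀΣ_{pq}(ΔAy-Δb) has a solution in the closed ball S = {(ΔA, Δb) : ‖[ΔA, θΔb]‖_F ≤ ξ*}, where ξ* = 2μ̄/(1 + √(1 - 4η₁‖J_ILS†‖₂μ̄)), provided 4η₁‖J_ILS†‖₂μ̄ < 1. -/
open Matrix Kronecker

noncomputable section

/-- Column-stacking vectorization of a matrix (indexed by (column, row)). -/
def vecCol {m n : Type*} (A : Matrix m n ℝ) : n × m → ℝ := fun ji => A ji.2 ji.1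

/-- Euclidean (2-)norm of a vector. -/
def euclNorm {ι : Type*} [Fintype ι] (v : ι → ℝ) : ℝ :=
  Real.sqrt (∑ i, v i ^ 2)

/-- Frobenius norm of a matrix. -/
def frob {ι κ : Type*} [Fintype ι] [Fintype κ] (M : Matrix ι κ ℝ) : ℝ :=
  Real.sqrt (∑ i, ∑ j, M i j ^ 2)

/-- Spectral norm (2-operator norm) of a matrix. -/
def specNorm {ι κ : Type*} [Fintype ι] [Fintype κ] (M : Matrix ι κ ℝ) : ℝ :=
  sSup {t | ∃ v : κ → ℝ, euclNorm v = 1 ∧ t = euclNorm (M.mulVec v)}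

/-- Moore–Penrose pseudoinverse of a full-row-rank matrix: `M† = Mᵀ(MMᵀ)⁻¹`. -/
def pinvFRR {ι κ : Type*} [Fintype ι] [Fintype κ] [DecidableEq ι]
    (M : Matrix ι κ ℝ) : Matrix κ ι ℝ :=
  Mᵀ * (M * Mᵀ)⁻¹

/-- The normwise backward error
`μ = min{‖[ΔA, θΔb]‖_F : (A+ΔA)ᵀΣ(b+Δb−(A+ΔA)y) = 0}`. -/
def bwerr (p q n : ℕ) (A : Matrix (Fin p ⊕ Fin q) (Fin n) ℝ)
    (b : Fin p ⊕ Fin q → ℝ) (y : Fin n → ℝ) (θ : ℝ) : ℝ :=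
  sInf {t | ∃ (ΔA : Matrix (Fin p ⊕ Fin q) (Fin n) ℝ) (Δb : Fin p ⊕ Fin q → ℝ),
    (A + ΔA)ᵀ.mulVec ((Sig p q).mulVec (b + Δb - (A + ΔA).mulVec y)) = 0 ∧
      t = frob (Matrix.fromCols ΔA (Matrix.replicateCol Unit (θ • Δb)))}

/-- Linearization estimate `μ̄ = ‖J_ILS† AᵀΣ r_y‖₂` of the backward error. -/
def muBar (p q n : ℕ) (A : Matrix (Fin p ⊕ Fin q) (Fin n) ℝ)
    (b : Fin p ⊕ Fin q → ℝ) (y : Fin n → ℝ) (θ : ℝ) : ℝ :=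
  euclNorm ((pinvFRR (JILS p q n A (b - A.mulVec y) y θ)).mulVec
    ((Aᵀ * Sig p q).mulVec (b - A.mulVec y)))

/-!
Write `x = [vec ΔA; θΔb]`. The system is the fixed-point equation `x = c + β(x, x)` with
`c = -J†AᵀΣr_y` and the bilinear map `β(u, v) = J† ΔA(u)ᵀ Σ (ΔA(v) y - Δb(v))`. Since
`‖ΔA‖_F ≤ ‖x‖` and `ΔA y - Δb = [ΔA, θΔb] [y; -θ⁻¹]` has norm at most `η₁ ‖x‖`, we get
`‖β(u, v)‖ ≤ K ‖u‖ ‖v‖` with `K = η₁ ‖J†‖₂`. On the ball whose radius `ξ*` is the smaller root of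
`K ξ² - ξ + μ̄ = 0`, the map `x ↦ c + β(x, x)` is a self-map, and it is a contraction with constant
`2 K ξ* = 1 - √(1 - 4 K μ̄) < 1`; Banach's fixed-point theorem (instead of Brouwer's) gives the
solution.
-/

section Norms

variable {ι κ : Type*} [Fintype ι] [Fintype κ]

lemma euclNorm_nonneg (v : ι → ℝ) : 0 ≤ euclNorm v :=
  Real.sqrt_nonneg _

lemma euclNorm_eq_norm (v : ι → ℝ) : euclNorm v = ‖WithLp.toLp 2 v‖ := by
  simp [euclNorm, EuclideanSpace.norm_eq]

open scoped Matrix.Norms.Frobenius in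
lemma frob_eq_norm (M : Matrix ι κ ℝ) : frob M = ‖M‖ := by
  simp [frob, frobenius_norm_def, Real.sqrt_eq_rpow]

open scoped Matrix.Norms.Frobenius in
lemma euclNorm_mulVec_le_frob (M : Matrix ι κ ℝ) (v : κ → ℝ) :
    euclNorm (M *ᵥ v) ≤ frob M * euclNorm v := by
  have := frobenius_norm_mul M (replicateCol Unit v)
  rwa [← replicateCol_mulVec, frobenius_norm_replicateCol, frobenius_norm_replicateCol,
    ← euclNorm_eq_norm, ← euclNorm_eq_norm, ← frob_eq_norm] at this

open scoped Matrix.Norms.Frobenius in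
lemma frob_transpose (M : Matrix ι κ ℝ) : frob Mᵀ = frob M := by
  rw [frob_eq_norm, frob_eq_norm, frobenius_norm_transpose]

open scoped Matrix.Norms.L2Operator in
lemma specNorm_eq_norm [DecidableEq κ] (M : Matrix ι κ ℝ) : specNorm M = ‖M‖ := by
  rw [l2_opNorm_def, ← ContinuousLinearMap.sSup_sphere_eq_norm]
  refine congrArg sSup (Set.ext fun t => ?_)
  simp only [Set.mem_ofPred_eq, Set.mem_image, mem_sphere_zero_iff_norm, euclNorm_eq_norm]
  constructor
  · rintro ⟨v, hv, rfl⟩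
    exact ⟨WithLp.toLp 2 v, hv, rfl⟩
  · rintro ⟨x, hx, rfl⟩
    exact ⟨WithLp.ofLp x, hx, rfl⟩

open scoped Matrix.Norms.L2Operator in
lemma euclNorm_mulVec_le_specNorm (M : Matrix ι κ ℝ) (v : κ → ℝ) :
    euclNorm (M *ᵥ v) ≤ specNorm M * euclNorm v := by
  classical
  rw [specNorm_eq_norm, euclNorm_eq_norm, euclNorm_eq_norm]
  exact l2_opNorm_mulVec M (WithLp.toLp 2 v)

open scoped Matrix.Norms.L2Operator in
lemma specNorm_nonneg (M : Matrix ι κ ℝ) : 0 ≤ specNorm M := by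
  classical
  exact specNorm_eq_norm M ▸ norm_nonneg M

end Norms

def smallRoot (K μ : ℝ) : ℝ := 2 * μ / (1 + √(1 - 4 * K * μ))

section SmallRoot

variable {K μ : ℝ}

lemma smallRoot_nonneg (hμ : 0 ≤ μ) : 0 ≤ smallRoot K μ := by
  unfold smallRoot
  positivity

lemma mul_smallRoot_sq_add (h : 4 * K * μ ≤ 1) : K * smallRoot K μ ^ 2 + μ = smallRoot K μ := by
  unfold smallRoot
  set s := √(1 - 4 * K * μ)
  have hs : s ^ 2 = 1 - 4 * K * μ := Real.sq_sqrt (by linarith)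
  have hpos : 0 < 1 + s := by positivity
  field_simp
  linear_combination μ * hs

lemma two_mul_mul_smallRoot (h : 4 * K * μ ≤ 1) :
    2 * K * smallRoot K μ = 1 - √(1 - 4 * K * μ) := by
  unfold smallRoot
  set s := √(1 - 4 * K * μ)
  have hs : s ^ 2 = 1 - 4 * K * μ := Real.sq_sqrt (by linarith)
  have hpos : 0 < 1 + s := by positivity
  field_simp
  linear_combination hs

lemma two_mul_mul_smallRoot_lt_one (h : 4 * K * μ < 1) : 2 * K * smallRoot K μ < 1 := by
  rw [two_mul_mul_smallRoot h.le]
  linarith [Real.sqrt_pos.mpr (sub_pos.mpr h)]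

end SmallRoot

open Metric Set in
theorem exists_eq_add_bilin_self_norm_le_smallRoot {E : Type*} [NormedAddCommGroup E]
    [NormedSpace ℝ E] [CompleteSpace E] (β : E →ₗ[ℝ] E →ₗ[ℝ] E) {K : ℝ} (hK : 0 ≤ K)
    (hβ : ∀ u v, ‖β u v‖ ≤ K * ‖u‖ * ‖v‖) (c : E) (hc : 4 * K * ‖c‖ < 1) :
    ∃ x, ‖x‖ ≤ smallRoot K ‖c‖ ∧ x = c + β x x := by
  set ξ := smallRoot K ‖c‖
  have hξ : 0 ≤ ξ := smallRoot_nonneg (norm_nonneg c)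
  have hroot : K * ξ ^ 2 + ‖c‖ = ξ := mul_smallRoot_sq_add hc.le
  have hL : 0 ≤ 2 * K * ξ := by positivity
  let f : E → E := fun x => c + β x x
  have hmaps : MapsTo f (closedBall 0 ξ) (closedBall 0 ξ) := by
    intro x hx
    rw [mem_closedBall_zero_iff] at hx ⊢
    calc ‖c + β x x‖ ≤ ‖c‖ + K * ‖x‖ * ‖x‖ := norm_add_le_of_le le_rfl (hβ x x)
      _ ≤ ‖c‖ + K * ξ * ξ := by gcongr
      _ = ξ := by linear_combination hroot
  have hlip : LipschitzOnWith (2 * K * ξ).toNNReal f (closedBall 0 ξ) := by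
    refine LipschitzOnWith.of_dist_le_mul fun x hx y hy => ?_
    rw [mem_closedBall_zero_iff] at hx hy
    have hdiff : f x - f y = β (x - y) x + β y (x - y) := by
      simp only [f, map_sub, LinearMap.sub_apply]
      abel
    calc dist (f x) (f y) = ‖β (x - y) x + β y (x - y)‖ := by rw [dist_eq_norm, hdiff]
      _ ≤ K * ‖x - y‖ * ‖x‖ + K * ‖y‖ * ‖x - y‖ := norm_add_le_of_le (hβ _ _) (hβ _ _)
      _ ≤ K * ‖x - y‖ * ξ + K * ξ * ‖x - y‖ := by gcongr
      _ = (2 * K * ξ).toNNReal * dist x y := by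
        rw [Real.coe_toNNReal _ hL, dist_eq_norm]
        ring
  have hcontr : ContractingWith (2 * K * ξ).toNNReal (hmaps.restrict f _ _) :=
    ⟨by simpa using two_mul_mul_smallRoot_lt_one hc, hlip.mapsToRestrict hmaps⟩
  obtain ⟨x, hx, hfix, -⟩ := hcontr.exists_fixedPoint' isClosed_closedBall.isComplete hmaps
    (mem_closedBall_self hξ) (edist_ne_top _ _)
  exact ⟨x, mem_closedBall_zero_iff.mp hx, hfix.symm⟩

section Unstack

variable {m n : Type*}

-- A perturbation `(ΔA, Δb)` is stored as the stacked vector `x = [vec ΔA; θΔb]`, indexed like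
-- `Sum.elim (vecCol ΔA) (θ • Δb)`; `unstackA` and `unstackB θ` read `ΔA` and `Δb` back off `x`.

def unstackA : ((n × m) ⊕ m → ℝ) →ₗ[ℝ] Matrix m n ℝ where
  toFun x i j := x (Sum.inl (j, i))
  map_add' _ _ := rfl
  map_smul' _ _ := rfl

lemma unstackA_apply (x : (n × m) ⊕ m → ℝ) (i : m) (j : n) :
    unstackA x i j = x (Sum.inl (j, i)) :=
  rfl

def unstackB (θ : ℝ) : ((n × m) ⊕ m → ℝ) →ₗ[ℝ] m → ℝ where
  toFun x := θ⁻¹ • (x ∘ Sum.inr)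
  map_add' x x' := smul_add θ⁻¹ (x ∘ Sum.inr) (x' ∘ Sum.inr)
  map_smul' c x := smul_comm θ⁻¹ c (x ∘ Sum.inr)

lemma unstackB_apply (θ : ℝ) (x : (n × m) ⊕ m → ℝ) : unstackB θ x = θ⁻¹ • (x ∘ Sum.inr) :=
  rfl

lemma smul_unstackB {θ : ℝ} (hθ : θ ≠ 0) (x : (n × m) ⊕ m → ℝ) :
    θ • unstackB θ x = x ∘ Sum.inr := by
  rw [unstackB_apply, smul_inv_smul₀ hθ]

lemma sumElim_vecCol_unstackA {θ : ℝ} (hθ : θ ≠ 0) (x : (n × m) ⊕ m → ℝ) :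
    Sum.elim (vecCol (unstackA x)) (θ • unstackB θ x) = x := by
  rw [smul_unstackB hθ]
  ext (_ | _) <;> rfl

lemma frob_fromCols_unstackA [Fintype m] [Fintype n] (x : (n × m) ⊕ m → ℝ) :
    frob (fromCols (unstackA x) (replicateCol Unit (x ∘ Sum.inr))) = euclNorm x := by
  simp only [frob, euclNorm, Fintype.sum_sum_type, Fintype.sum_prod_type, Finset.sum_add_distrib]
  rw [Finset.sum_comm]
  simp [unstackA_apply]

lemma frob_le_frob_fromCols {k : Type*} [Fintype m] [Fintype n] [Fintype k]
    (A : Matrix m n ℝ) (B : Matrix m k ℝ) :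
    frob A ≤ frob (fromCols A B) := by
  refine Real.sqrt_le_sqrt (Finset.sum_le_sum fun i _ => ?_)
  simp only [Fintype.sum_sum_type, fromCols_apply_inl, fromCols_apply_inr]
  exact le_add_of_nonneg_right (Finset.sum_nonneg fun _ _ => sq_nonneg _)

lemma euclNorm_sumElim_unit [Fintype n] (y : n → ℝ) (t : ℝ) :
    euclNorm (Sum.elim y fun _ : Unit => t) = √(t ^ 2 + euclNorm y ^ 2) := by
  rw [euclNorm, euclNorm, Real.sq_sqrt (Finset.sum_nonneg fun _ _ => sq_nonneg _),
    Fintype.sum_sum_type]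
  simp [add_comm]

lemma unstackA_mulVec_sub_unstackB [Fintype n] (θ : ℝ) (y : n → ℝ) (x : (n × m) ⊕ m → ℝ) :
    unstackA x *ᵥ y - unstackB θ x =
      fromCols (unstackA x) (replicateCol Unit (x ∘ Sum.inr)) *ᵥ Sum.elim y fun _ => -θ⁻¹ := by
  rw [fromCols_mulVec_sumElim]
  ext i
  simp [unstackA_apply, unstackB_apply, mulVec, dotProduct, sub_eq_add_neg, mul_comm]

lemma euclNorm_unstackA_mulVec_sub_unstackB_le [Fintype m] [Fintype n] (θ : ℝ) (y : n → ℝ)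
    (x : (n × m) ⊕ m → ℝ) :
    euclNorm (unstackA x *ᵥ y - unstackB θ x) ≤ √(θ⁻¹ ^ 2 + euclNorm y ^ 2) * euclNorm x := by
  rw [unstackA_mulVec_sub_unstackB, ← frob_fromCols_unstackA, mul_comm, ← neg_sq,
    ← euclNorm_sumElim_unit]
  exact euclNorm_mulVec_le_frob _ _

lemma frob_unstackA_le [Fintype m] [Fintype n] (x : (n × m) ⊕ m → ℝ) :
    frob (unstackA x) ≤ euclNorm x :=
  frob_fromCols_unstackA x ▸ frob_le_frob_fromCols _ _

end Unstack

lemma euclNorm_Sig_mulVec {p q : ℕ} (w : Fin p ⊕ Fin q → ℝ) :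
    euclNorm (Sig p q *ᵥ w) = euclNorm w := by
  simp [Sig, fromBlocks_mulVec, Matrix.neg_mulVec, euclNorm, Fintype.sum_sum_type]

lemma euclNorm_transpose_mul_Sig_mulVec_le {p q : ℕ} {k : Type*} [Fintype k]
    (A : Matrix (Fin p ⊕ Fin q) k ℝ) (w : Fin p ⊕ Fin q → ℝ) :
    euclNorm ((Aᵀ * Sig p q) *ᵥ w) ≤ frob A * euclNorm w := by
  rw [← mulVec_mulVec, ← frob_transpose, ← euclNorm_Sig_mulVec w]
  exact euclNorm_mulVec_le_frob _ _

section QuadraticTerm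

variable {p q : ℕ} {n : Type*} [Fintype n]

-- With `P = J†` this is the `β` of the system `x = -P AᵀΣ r_y + β(x, x)`.
def quadraticTerm (θ : ℝ) (y : n → ℝ)
    (P : Matrix ((n × (Fin p ⊕ Fin q)) ⊕ (Fin p ⊕ Fin q)) n ℝ) :
    EuclideanSpace ℝ ((n × (Fin p ⊕ Fin q)) ⊕ (Fin p ⊕ Fin q)) →ₗ[ℝ]
      EuclideanSpace ℝ ((n × (Fin p ⊕ Fin q)) ⊕ (Fin p ⊕ Fin q)) →ₗ[ℝ]
        EuclideanSpace ℝ ((n × (Fin p ⊕ Fin q)) ⊕ (Fin p ⊕ Fin q)) :=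
  LinearMap.mk₂ ℝ (fun u v => WithLp.toLp 2 (P *ᵥ ((unstackA u.ofLp)ᵀ * Sig p q) *ᵥ
      (unstackA v.ofLp *ᵥ y - unstackB θ v.ofLp)))
    (fun _ _ _ => by
      simp only [WithLp.ofLp_add, map_add, transpose_add, Matrix.add_mul, Matrix.add_mulVec,
        Matrix.mulVec_add, WithLp.toLp_add])
    (fun _ _ _ => by
      simp only [WithLp.ofLp_smul, map_smul, transpose_smul, Matrix.smul_mul, Matrix.smul_mulVec,
        Matrix.mulVec_smul, WithLp.toLp_smul])
    (fun _ _ _ => by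
      simp only [WithLp.ofLp_add, map_add, Matrix.add_mulVec, Matrix.mulVec_add, WithLp.toLp_add,
        add_sub_add_comm])
    (fun _ _ _ => by
      simp only [WithLp.ofLp_smul, map_smul, Matrix.smul_mulVec, Matrix.mulVec_smul, ← smul_sub,
        WithLp.toLp_smul])

lemma norm_quadraticTerm_le (θ : ℝ) (y : n → ℝ)
    (P : Matrix ((n × (Fin p ⊕ Fin q)) ⊕ (Fin p ⊕ Fin q)) n ℝ)
    (u v : EuclideanSpace ℝ ((n × (Fin p ⊕ Fin q)) ⊕ (Fin p ⊕ Fin q))) :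
    ‖quadraticTerm θ y P u v‖ ≤ √(θ⁻¹ ^ 2 + euclNorm y ^ 2) * specNorm P * ‖u‖ * ‖v‖ := by
  have hnorm (w : EuclideanSpace ℝ ((n × (Fin p ⊕ Fin q)) ⊕ (Fin p ⊕ Fin q))) :
      ‖w‖ = euclNorm w.ofLp := by simp [euclNorm_eq_norm]
  rw [hnorm, hnorm, hnorm]
  calc euclNorm (P *ᵥ ((unstackA u.ofLp)ᵀ * Sig p q) *ᵥ (unstackA v.ofLp *ᵥ y - unstackB θ v.ofLp))
      ≤ specNorm P *
          (frob (unstackA u.ofLp) * euclNorm (unstackA v.ofLp *ᵥ y - unstackB θ v.ofLp)) :=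
        (euclNorm_mulVec_le_specNorm _ _).trans <| mul_le_mul_of_nonneg_left
          (euclNorm_transpose_mul_Sig_mulVec_le _ _) (specNorm_nonneg P)
    _ ≤ specNorm P * (euclNorm u.ofLp * (√(θ⁻¹ ^ 2 + euclNorm y ^ 2) * euclNorm v.ofLp)) := by
        refine mul_le_mul_of_nonneg_left ?_ (specNorm_nonneg P)
        exact mul_le_mul (frob_unstackA_le _) (euclNorm_unstackA_mulVec_sub_unstackB_le θ y _)
          (euclNorm_nonneg _) (euclNorm_nonneg _)
    _ = _ := by ring

end QuadraticTerm

theorem stmt7_general (p q n : ℕ) (A : Matrix (Fin p ⊕ Fin q) (Fin n) ℝ)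
    (b : Fin p ⊕ Fin q → ℝ) (y : Fin n → ℝ) (θ : ℝ) (hθ : 0 < θ)
    (hsmall : 4 * Real.sqrt (θ⁻¹ ^ 2 + euclNorm y ^ 2) *
        specNorm (pinvFRR (JILS p q n A (b - A.mulVec y) y θ)) *
          muBar p q n A b y θ < 1) :
    ∃ (ΔA : Matrix (Fin p ⊕ Fin q) (Fin n) ℝ) (Δb : Fin p ⊕ Fin q → ℝ),
      frob (Matrix.fromCols ΔA (Matrix.replicateCol Unit (θ • Δb))) ≤
        2 * muBar p q n A b y θ /
          (1 + Real.sqrt (1 - 4 * Real.sqrt (θ⁻¹ ^ 2 + euclNorm y ^ 2) *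
            specNorm (pinvFRR (JILS p q n A (b - A.mulVec y) y θ)) *
              muBar p q n A b y θ)) ∧
      Sum.elim (vecCol ΔA) (θ • Δb) =
        -(pinvFRR (JILS p q n A (b - A.mulVec y) y θ)).mulVec
            ((Aᵀ * Sig p q).mulVec (b - A.mulVec y)) +
          (pinvFRR (JILS p q n A (b - A.mulVec y) y θ)).mulVec
            ((ΔAᵀ * Sig p q).mulVec (ΔA.mulVec y - Δb)) := by
  set P := pinvFRR (JILS p q n A (b - A.mulVec y) y θ)
  set c := P *ᵥ ((Aᵀ * Sig p q) *ᵥ (b - A *ᵥ y))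
  have hc : ‖WithLp.toLp 2 (-c)‖ = muBar p q n A b y θ := by
    rw [WithLp.toLp_neg, norm_neg, ← euclNorm_eq_norm]
    rfl
  have hK : 0 ≤ √(θ⁻¹ ^ 2 + euclNorm y ^ 2) * specNorm P :=
    mul_nonneg (Real.sqrt_nonneg _) (specNorm_nonneg P)
  obtain ⟨z, hz, hfix⟩ := exists_eq_add_bilin_self_norm_le_smallRoot (quadraticTerm θ y P) hK
    (norm_quadraticTerm_le θ y P) (WithLp.toLp 2 (-c)) (by rw [hc, ← mul_assoc]; exact hsmall)
  refine ⟨unstackA z.ofLp, unstackB θ z.ofLp, ?_, ?_⟩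
  · rw [smul_unstackB hθ.ne', frob_fromCols_unstackA, euclNorm_eq_norm, WithLp.toLp_ofLp]
    simpa only [smallRoot, hc, mul_assoc] using hz
  · rw [sumElim_vecCol_unstackA hθ.ne']
    exact congrArg WithLp.ofLp hfix

/-- Under the hypotheses of the linearization estimate theorem, the nonlinear system
`[vec ΔA; θΔb] = −J†AᵀΣr_y + J†ΔAᵀΣ(ΔA y − Δb)` has a solution with
`‖[ΔA, θΔb]‖_F ≤ ξ* = 2μ̄/(1+√(1−4η₁‖J†‖₂μ̄))`. -/
theorem stmt7 (p q n : ℕ) (A : Matrix (Fin p ⊕ Fin q) (Fin n) ℝ)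
    (b : Fin p ⊕ Fin q → ℝ) (y : Fin n → ℝ) (θ : ℝ) (hθ : 0 < θ)
    (hrank : (JILS p q n A (b - A.mulVec y) y θ).rank = n)
    (hsmall : 4 * Real.sqrt (θ⁻¹ ^ 2 + euclNorm y ^ 2) *
        specNorm (pinvFRR (JILS p q n A (b - A.mulVec y) y θ)) *
          muBar p q n A b y θ < 1) :
    ∃ (ΔA : Matrix (Fin p ⊕ Fin q) (Fin n) ℝ) (Δb : Fin p ⊕ Fin q → ℝ),
      frob (Matrix.fromCols ΔA (Matrix.replicateCol Unit (θ • Δb))) ≤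
        2 * muBar p q n A b y θ /
          (1 + Real.sqrt (1 - 4 * Real.sqrt (θ⁻¹ ^ 2 + euclNorm y ^ 2) *
            specNorm (pinvFRR (JILS p q n A (b - A.mulVec y) y θ)) *
              muBar p q n A b y θ)) ∧
      Sum.elim (vecCol ΔA) (θ • Δb) =
        -(pinvFRR (JILS p q n A (b - A.mulVec y) y θ)).mulVec
            ((Aᵀ * Sig p q).mulVec (b - A.mulVec y)) +
          (pinvFRR (JILS p q n A (b - A.mulVec y) y θ)).mulVec
            ((ΔAᵀ * Sig p q).mulVec (ΔA.mulVec y - Δb)) :=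
  stmt7_general p q n A b y θ hθ hsmall

end
end

section
/- The adjoint of the Fréchet derivative J(B,c) of g(A,b) = Lᵀ(AᵀΣ_{pq}A)^{-1}AᵀΣ_{pq}b, with respect to the trace inner product on ℝ^{m×n} × ℝ^m and the standard inner product on ℝ^k, is J*(u) = (Σ_{pq}r uᵀLᵀ(AᵀΣ_{pq}A)^{-1} − Σ_{pq}A(AᵀΣ_{pq}A)^{-1}Lu xᵀ, Σ_{pq}A(AᵀΣ_{pq}A)^{-1}Lu), i.e., ⟨u, J(B,c)⟩ = ⟨J₁*(u), B⟩ + ⟨J₂*(u), c⟩ for all B, c, u. -/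
open Matrix

noncomputable section

lemma trace_vecMulVec_transpose_mul {m n : Type*} [Fintype m] [Fintype n]
    (a : m → ℝ) (c : n → ℝ) (B : Matrix m n ℝ) :
    ((Matrix.vecMulVec a c)ᵀ * B).trace = a ⬝ᵥ B.mulVec c := by
  simp only [Matrix.trace, Matrix.diag, Matrix.mul_apply, Matrix.transpose_apply,
    Matrix.vecMulVec_apply, dotProduct, Matrix.mulVec, Finset.mul_sum]
  rw [Finset.sum_comm]
  congr 1; ext i; congr 1; ext j; ring

/-- The adjoint of the Fréchet derivative
`J(B,c) = LᵀM⁻¹BᵀΣr − LᵀM⁻¹AᵀΣBx + LᵀM⁻¹AᵀΣc` with respect to the trace inner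
product on matrices and the standard inner products on vectors is
`J*(u) = (Σr uᵀLᵀM⁻¹ − ΣAM⁻¹Lu xᵀ, ΣAM⁻¹Lu)`, i.e.
`⟨u, J(B,c)⟩ = ⟨J₁*(u), B⟩ + ⟨J₂*(u), c⟩` for all `B`, `c`, `u`, where
`M = AᵀΣA`, `x = M⁻¹AᵀΣb`, `r = b − Ax`. -/
theorem stmt13 (p q n k : ℕ) (L : Matrix (Fin n) (Fin k) ℝ)
    (A : Matrix (Fin p ⊕ Fin q) (Fin n) ℝ) (b : Fin p ⊕ Fin q → ℝ)
    (h : (Aᵀ * Sig p q * A).PosDef)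
    (x : Fin n → ℝ) (hx : x = (Aᵀ * Sig p q * A)⁻¹.mulVec ((Aᵀ * Sig p q).mulVec b))
    (r : Fin p ⊕ Fin q → ℝ) (hr : r = b - A.mulVec x)
    (u : Fin k → ℝ) (B : Matrix (Fin p ⊕ Fin q) (Fin n) ℝ) (c : Fin p ⊕ Fin q → ℝ) :
    u ⬝ᵥ ((Lᵀ * (Aᵀ * Sig p q * A)⁻¹ * Bᵀ * Sig p q).mulVec r -
        (Lᵀ * (Aᵀ * Sig p q * A)⁻¹ * Aᵀ * Sig p q * B).mulVec x +
        (Lᵀ * (Aᵀ * Sig p q * A)⁻¹ * Aᵀ * Sig p q).mulVec c) =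
      ((Matrix.vecMulVec ((Sig p q).mulVec r)
            (Matrix.vecMul u (Lᵀ * (Aᵀ * Sig p q * A)⁻¹)) -
          Matrix.vecMulVec
            ((Sig p q * A * (Aᵀ * Sig p q * A)⁻¹ * L).mulVec u) x)ᵀ * B).trace +
        ((Sig p q * A * (Aᵀ * Sig p q * A)⁻¹ * L).mulVec u) ⬝ᵥ c := by
  have hS : (Sig p q)ᵀ = Sig p q := by
    simp [Sig, Matrix.fromBlocks_transpose]
  have hMsym : (Aᵀ * Sig p q * A)ᵀ = Aᵀ * Sig p q * A := by
    have := h.isHermitian.eq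
    simpa using this
  have hMinv : ((Aᵀ * (Sig p q * A))⁻¹)ᵀ = (Aᵀ * (Sig p q * A))⁻¹ := by
    rw [← Matrix.mul_assoc, Matrix.transpose_nonsing_inv, hMsym]
  have hadj : Matrix.vecMul u (Lᵀ * (Aᵀ * Sig p q * A)⁻¹ * Aᵀ * Sig p q)
      = (Sig p q * A * (Aᵀ * Sig p q * A)⁻¹ * L).mulVec u := by
    rw [← Matrix.mulVec_transpose]
    congr 1
    simp [Matrix.transpose_mul, hS, hMinv, Matrix.mul_assoc]
  rw [Matrix.transpose_sub, Matrix.sub_mul, Matrix.trace_sub,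
    trace_vecMulVec_transpose_mul, trace_vecMulVec_transpose_mul,
    dotProduct_add, dotProduct_sub]
  congr 1
  congr 1
  · rw [Matrix.dotProduct_mulVec,
      show Lᵀ * (Aᵀ * Sig p q * A)⁻¹ * Bᵀ * Sig p q
        = (Lᵀ * (Aᵀ * Sig p q * A)⁻¹) * (Bᵀ * Sig p q) by
          rw [Matrix.mul_assoc],
      ← Matrix.vecMul_vecMul, ← Matrix.dotProduct_mulVec,
      ← Matrix.mulVec_mulVec, Matrix.mulVec_transpose, dotProduct_comm,
      Matrix.dotProduct_mulVec]
  · rw [Matrix.dotProduct_mulVec, ← Matrix.vecMul_vecMul, hadj]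
    rw [← Matrix.dotProduct_mulVec]
  · rw [Matrix.dotProduct_mulVec, hadj]


end
end
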